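/- Let χ be a bicharacter on ℤ^I with values in 𝕜∖{0}, p ∈ I such that χ is p-finite, and i ∈ I∖{p}; write c_{pi} = c^χ_{pi}. Then in the free algebra 𝒰^+(χ) the element E^+_{i,1−c_{pi}} − E^−_{i,1−c_{pi}} lies in 𝕜·E_i E_p^{1−c_{pi}}, and in the free algebra 𝒰^−(χ) the element F^+_{i,1−c_{pi}} − F^−_{i,1−c_{pi}} lies in 𝕜·F_i F_p^{1−c_{pi}}. If moreover [1−c_{pi}]_{q_pp}! ≠ 0, then both differences are zero. -/

import Mathlib

/-- The quantum integer `[n]_q = 1 + q + ⋯ + q^{n-1}` for `n ∈ ℕ`. -/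
def qNat {𝕜 : Type*} [Field 𝕜] (q : 𝕜) (n : ℕ) : 𝕜 :=
  ∑ i ∈ Finset.range n, q ^ i

/-- The quantum factorial `[n]_q! = [1]_q [2]_q ⋯ [n]_q`. -/
def qFact {𝕜 : Type*} [Field 𝕜] (q : 𝕜) (n : ℕ) : 𝕜 :=
  ∏ i ∈ Finset.range n, qNat q (i + 1)

variable {𝕜 : Type*} [Field 𝕜] {I : Type*} [Fintype I] [DecidableEq I]

/-- The standard basis vector `ε_i` of `ℤ^I`. -/
def eps (i : I) : I → ℤ := Pi.single i 1

/-- `χ : ℤ^I × ℤ^I → 𝕜∖{0}` is a bicharacter. -/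
def IsBichar (χ : (I → ℤ) → (I → ℤ) → 𝕜) : Prop :=
  (∀ a b c : I → ℤ, χ (a + b) c = χ a c * χ b c) ∧
  (∀ c a b : I → ℤ, χ c (a + b) = χ c a * χ c b) ∧
  (∀ a b : I → ℤ, χ a b ≠ 0)

/-- `χ` is `p`-finite: for every `j ≠ p` there is `m ∈ ℕ₀` with
`[m+1]_{q_{pp}} = 0` or `q_{pp}^m q_{pj} q_{jp} = 1`. -/
def IsPFinite (χ : (I → ℤ) → (I → ℤ) → 𝕜) (p : I) : Prop :=
  ∀ j, j ≠ p → ∃ m : ℕ,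
    qNat (χ (eps p) (eps p)) (m + 1) = 0 ∨
    χ (eps p) (eps p) ^ m * χ (eps p) (eps j) * χ (eps j) (eps p) = 1

open Classical in
/-- The Cartan integers `c^χ_{pj}` of a (`p`-finite) bicharacter `χ`. -/
noncomputable def cartan (χ : (I → ℤ) → (I → ℤ) → 𝕜) (p j : I) : ℤ :=
  if p = j then 2
  else if h : ∃ m : ℕ,
      qNat (χ (eps p) (eps p)) (m + 1) = 0 ∨
      χ (eps p) (eps p) ^ m * χ (eps p) (eps j) * χ (eps j) (eps p) = 1
    then -(Nat.find h) else 0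

/-- The reflection `σ_p^χ ∈ Aut(ℤ^I)`, `σ_p^χ(ε_j) = ε_j − c^χ_{pj} ε_p`
(an involution, so equal to its own inverse). -/
noncomputable def sigmaChi (χ : (I → ℤ) → (I → ℤ) → 𝕜) (p : I) (a : I → ℤ) : I → ℤ :=
  a - (∑ j, cartan χ p j * a j) • eps p

/-- `r_p(χ) = (σ_p^χ)^*χ`, i.e. `r_p(χ)(a,b) = χ((σ_p^χ)⁻¹ a, (σ_p^χ)⁻¹ b)`. -/
noncomputable def rp (χ : (I → ℤ) → (I → ℤ) → 𝕜) (p : I) :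
    (I → ℤ) → (I → ℤ) → 𝕜 :=
  fun a b => χ (sigmaChi χ p a) (sigmaChi χ p b)

/-- The general recursion `Y_0 = Y`, `Y_{m+1} = X Y_m − α β^m Y_m X` in a
`𝕜`-algebra. With `X = E_p`, `Y = E_i` one gets: `E^+_{i,m}` for `α = q_{pi}`,
`β = q_{pp}`; `E^−_{i,m}` for `α = q_{ip}⁻¹`, `β = q_{pp}⁻¹`. With `X = F_p`,
`Y = F_i`: `F^+_{i,m}` for `α = q_{ip}`, `β = q_{pp}`; `F^−_{i,m}` for
`α = q_{pi}⁻¹`, `β = q_{pp}⁻¹`. -/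
def recE {A : Type*} [Ring A] [Algebra 𝕜 A] (α β : 𝕜) (X Y : A) : ℕ → A
  | 0 => Y
  | m + 1 => X * recE α β X Y m - (α * β ^ m) • (recE α β X Y m * X)

/-!
Write `L`, `R` for left and right multiplication by `X`. They commute, and
`recE α β X Y m = ∏_{j<m} (L - α β^j R) Y = ∑_{i+k=m} c_{m,k} X^i Y X^k` with the `q`-binomial
coefficients `c_{m,k} = (-α)^k β^(k(k-1)/2) [m choose k]_β`. Passing from `(α, β)` to
`(γ⁻¹, β⁻¹)` multiplies `c_{m,k}` by `(γ⁻¹ α⁻¹ β^(1-m))^k`, which is `1` when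
`β^(m-1) α γ = 1`. If instead `m` is the least positive index with `[m]_β = 0`, the absorption
identity `[k]_β c_{m,k} = -α β^(k-1) [m]_β c_{m-1,k-1}` forces `c_{m,k} = 0` for `0 < k < m`, so
the two sequences differ only in the coefficient of `Y X^m`.
-/

def recCoeff (α β : 𝕜) : ℕ → ℕ → 𝕜
  | 0, 0 => 1
  | 0, _ + 1 => 0
  | _ + 1, 0 => 1
  | m + 1, k + 1 => recCoeff α β m (k + 1) - α * β ^ m * recCoeff α β m k

lemma qNat_succ (q : 𝕜) (n : ℕ) : qNat q (n + 1) = qNat q n + q ^ n :=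
  Finset.sum_range_succ _ _

lemma qNat_succ' (q : 𝕜) (n : ℕ) : qNat q (n + 1) = 1 + q * qNat q n := by
  simp [qNat, Finset.sum_range_succ', Finset.mul_sum, pow_succ, add_comm, mul_comm]

lemma qNat_ne_zero_of_qFact_ne_zero {q : 𝕜} {n : ℕ} (h : qFact q (n + 1) ≠ 0) :
    qNat q (n + 1) ≠ 0 :=
  fun h0 => h (Finset.prod_eq_zero (Finset.self_mem_range_succ n) h0)

section recCoeff

variable (α β : 𝕜)

lemma recCoeff_succ_succ (m k : ℕ) :
    recCoeff α β (m + 1) (k + 1) = recCoeff α β m (k + 1) - α * β ^ m * recCoeff α β m k :=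
  rfl

@[simp]
lemma recCoeff_zero_right (m : ℕ) : recCoeff α β m 0 = 1 := by
  cases m <;> rfl

lemma recCoeff_eq_zero_of_lt {m k : ℕ} (h : m < k) : recCoeff α β m k = 0 := by
  induction m generalizing k with
  | zero => obtain ⟨k, rfl⟩ := Nat.exists_eq_succ_of_ne_zero h.ne'; rfl
  | succ m ih =>
    obtain ⟨k, rfl⟩ := Nat.exists_eq_succ_of_ne_zero (Nat.ne_zero_of_lt h)
    rw [recCoeff, ih (by omega), ih (by omega), mul_zero, sub_zero]

lemma recCoeff_one (m : ℕ) : recCoeff α β m 1 = -(α * qNat β m) := by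
  induction m with
  | zero => simp [recCoeff, qNat]
  | succ m ih => rw [recCoeff, ih, recCoeff_zero_right, qNat_succ]; ring

/-- The second `q`-Pascal rule, obtained by peeling off the factor `L - α R` first. -/
lemma recCoeff_succ_succ' (m k : ℕ) :
    recCoeff α β (m + 1) (k + 1) =
      β ^ (k + 1) * recCoeff α β m (k + 1) - α * β ^ k * recCoeff α β m k := by
  induction m generalizing k with
  | zero => cases k <;> simp [recCoeff]
  | succ m ih =>
    rcases k with _ | k
    · rw [recCoeff_one, recCoeff_one, recCoeff_zero_right, qNat_succ' β (m + 1)]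
      ring
    · rw [recCoeff_succ_succ _ _ (m + 1)]
      linear_combination ih (k + 1) - α * β ^ (m + 1) * ih k
        - β ^ (k + 2) * recCoeff_succ_succ α β m (k + 1)
        + α * β ^ (k + 1) * recCoeff_succ_succ α β m k

lemma qNat_mul_recCoeff_succ_succ (m k : ℕ) :
    qNat β (k + 1) * recCoeff α β (m + 1) (k + 1) =
      -(α * β ^ k * qNat β (m + 1) * recCoeff α β m k) := by
  induction m generalizing k with
  | zero => cases k <;> simp [recCoeff, qNat]
  | succ m ih =>
    rcases k with _ | k
    · simp [recCoeff_one, qNat]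
    · have hk := ih (k + 1)
      have hk' := ih k
      rw [qNat_succ β (k + 1)] at hk ⊢
      rw [recCoeff_succ_succ _ _ (m + 1), qNat_succ β (m + 1)]
      linear_combination hk - α * β ^ (m + 1) * hk'
        + α * β ^ (k + 1) * qNat β (m + 1) * recCoeff_succ_succ α β m k

end recCoeff

lemma recCoeff_inv_inv {α β : 𝕜} (γ : 𝕜) (hα : α ≠ 0) (hβ : β ≠ 0) (m k : ℕ) :
    recCoeff γ β⁻¹ (m + 1) k = (γ / (α * β ^ m)) ^ k * recCoeff α β (m + 1) k := by
  induction m generalizing k with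
  | zero =>
    rcases k with _ | _ | k
    · simp
    · simp [recCoeff, div_mul_cancel₀ γ hα]
    · simp [recCoeff_eq_zero_of_lt]
  | succ m ih =>
    rcases k with _ | k
    · simp
    · have ht : γ / (α * β ^ (m + 1)) = γ / (α * β ^ m) * β⁻¹ := by
        rw [pow_succ, ← mul_assoc, div_mul_eq_div_div, div_eq_mul_inv]
      have hγ : γ = γ / (α * β ^ m) * β⁻¹ * α * β ^ (m + 1) := by
        field_simp
        ring
      rw [recCoeff_succ_succ', ih, ih, recCoeff_succ_succ _ _ (m + 1), ht]
      linear_combination (-(β⁻¹ ^ k * (γ / (α * β ^ m)) ^ k * recCoeff α β (m + 1) k)) * hγ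

section recE

open Finset

variable {A : Type*} [Ring A] [Algebra 𝕜 A] (X Y : A)

lemma recE_eq_sum_antidiagonal (α β : 𝕜) (m : ℕ) :
    recE α β X Y m =
      ∑ ik ∈ antidiagonal m, recCoeff α β m ik.2 • (X ^ ik.1 * Y * X ^ ik.2) := by
  induction m with
  | zero => simp [recE]
  | succ m ih =>
    set S := ∑ ik ∈ antidiagonal m, recCoeff α β m ik.2 • (X ^ ik.1 * Y * X ^ ik.2)
    have hL : X * S = X ^ (m + 1) * Y +
        ∑ ik ∈ antidiagonal m, recCoeff α β m (ik.2 + 1) • (X ^ ik.1 * Y * X ^ (ik.2 + 1)) := by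
      have h := Nat.sum_antidiagonal_succ
        (f := fun ik : ℕ × ℕ => recCoeff α β m ik.2 • (X ^ ik.1 * Y * X ^ ik.2)) (n := m)
      rw [Nat.sum_antidiagonal_succ', recCoeff_eq_zero_of_lt α β m.lt_succ_self, zero_smul,
        zero_add] at h
      simp only [recCoeff_zero_right, one_smul, pow_zero, mul_one] at h
      rw [h, mul_sum]
      refine sum_congr rfl fun ik _ => ?_
      rw [mul_smul_comm, ← mul_assoc, ← mul_assoc, ← pow_succ']
    have hR : (α * β ^ m) • (S * X) = ∑ ik ∈ antidiagonal m,
        (α * β ^ m * recCoeff α β m ik.2) • (X ^ ik.1 * Y * X ^ (ik.2 + 1)) := by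
      rw [sum_mul, smul_sum]
      refine sum_congr rfl fun ik _ => ?_
      rw [smul_mul_assoc, smul_smul, mul_assoc _ (X ^ ik.2), ← pow_succ]
    rw [recE, ih, hL, hR, Nat.sum_antidiagonal_succ', add_sub_assoc, ← sum_sub_distrib]
    simp only [recCoeff_zero_right, one_smul, pow_zero, mul_one, recCoeff_succ_succ, sub_smul]

variable {α β : 𝕜} {n : ℕ}

lemma recE_eq_recE_inv_inv (γ : 𝕜) (hα : α ≠ 0) (hβ : β ≠ 0) (h : β ^ n * α * γ = 1) :
    recE α β X Y (n + 1) = recE γ⁻¹ β⁻¹ X Y (n + 1) := by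
  have hγ : γ⁻¹ / (α * β ^ n) = 1 := by
    rw [inv_eq_of_mul_eq_one_left (a := α * β ^ n) (by linear_combination h),
      div_self (mul_ne_zero hα (pow_ne_zero n hβ))]
  simp only [recE_eq_sum_antidiagonal, recCoeff_inv_inv γ⁻¹ hα hβ, hγ, one_pow, one_mul]

lemma recCoeff_eq_zero_of_qNat_eq_zero (h0 : qNat β (n + 1) = 0)
    (hmin : ∀ m < n, qNat β (m + 1) ≠ 0) {j : ℕ} (hj : j < n) :
    recCoeff α β (n + 1) (j + 1) = 0 := by
  have h := qNat_mul_recCoeff_succ_succ α β n j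
  rw [h0, mul_zero, zero_mul, neg_zero] at h
  exact (mul_eq_zero.mp h).resolve_left (hmin j hj)

lemma exists_recE_sub_recE_inv_inv_eq_smul (γ : 𝕜) (hα : α ≠ 0) (hβ : β ≠ 0)
    (h : qNat β (n + 1) = 0 ∨ β ^ n * α * γ = 1) (hmin : ∀ m < n, qNat β (m + 1) ≠ 0) :
    ∃ k : 𝕜, recE α β X Y (n + 1) - recE γ⁻¹ β⁻¹ X Y (n + 1) = k • (Y * X ^ (n + 1)) := by
  rcases h with h0 | h
  · have hcoeff : ∀ k ≤ n, recCoeff α β (n + 1) k = recCoeff γ⁻¹ β⁻¹ (n + 1) k := by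
      rintro (_ | j) hj
      · simp
      · rw [recCoeff_inv_inv γ⁻¹ hα hβ, recCoeff_eq_zero_of_qNat_eq_zero h0 hmin hj, mul_zero]
    refine ⟨recCoeff α β (n + 1) (n + 1) - recCoeff γ⁻¹ β⁻¹ (n + 1) (n + 1), ?_⟩
    rw [recE_eq_sum_antidiagonal, recE_eq_sum_antidiagonal, ← sum_sub_distrib,
      Nat.sum_antidiagonal_succ, sum_eq_zero, add_zero, ← sub_smul, pow_zero, one_mul]
    intro ik hik
    rw [← sub_smul, hcoeff ik.2 (HasAntidiagonal.antidiagonal.snd_le hik), sub_self, zero_smul]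
  · exact ⟨0, by rw [recE_eq_recE_inv_inv X Y γ hα hβ h, sub_self, zero_smul]⟩

end recE

omit [Fintype I] in
lemma exists_toNat_one_sub_cartan_eq {χ : (I → ℤ) → (I → ℤ) → 𝕜} {p i : I}
    (hp : IsPFinite χ p) (hip : i ≠ p) :
    ∃ n : ℕ, (1 - cartan χ p i).toNat = n + 1 ∧
      (qNat (χ (eps p) (eps p)) (n + 1) = 0 ∨
        χ (eps p) (eps p) ^ n * χ (eps p) (eps i) * χ (eps i) (eps p) = 1) ∧
      ∀ m < n, qNat (χ (eps p) (eps p)) (m + 1) ≠ 0 := by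
  classical
  refine ⟨Nat.find (hp i hip), ?_, Nat.find_spec (hp i hip),
    fun m hm h0 => Nat.find_min (hp i hip) hm (Or.inl h0)⟩
  rw [cartan, if_neg hip.symm, dif_pos (hp i hip)]
  omega

open FreeAlgebra in
/-- Lemma (le:E+=E-): for a `p`-finite bicharacter `χ` and `i ≠ p`, in the free
algebra `𝒰^+(χ)` one has `E^+_{i,1−c_{pi}} − E^−_{i,1−c_{pi}} ∈ 𝕜 E_i E_p^{1−c_{pi}}`,
and in `𝒰^−(χ)` one has `F^+_{i,1−c_{pi}} − F^−_{i,1−c_{pi}} ∈ 𝕜 F_i F_p^{1−c_{pi}}`;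
if `[1−c_{pi}]_{q_{pp}}! ≠ 0` then both differences vanish. -/
theorem Eplus_sub_Eminus (χ : (I → ℤ) → (I → ℤ) → 𝕜) (hχ : IsBichar χ)
    (p : I) (hp : IsPFinite χ p) (i : I) (hip : i ≠ p) :
    (∃ k : 𝕜,
      recE (χ (eps p) (eps i)) (χ (eps p) (eps p)) (ι 𝕜 p) (ι 𝕜 i)
          (1 - cartan χ p i).toNat -
        recE (χ (eps i) (eps p))⁻¹ (χ (eps p) (eps p))⁻¹ (ι 𝕜 p) (ι 𝕜 i)
          (1 - cartan χ p i).toNat =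
        k • (ι 𝕜 i * ι 𝕜 p ^ (1 - cartan χ p i).toNat)) ∧
    (∃ k : 𝕜,
      recE (χ (eps i) (eps p)) (χ (eps p) (eps p)) (ι 𝕜 p) (ι 𝕜 i)
          (1 - cartan χ p i).toNat -
        recE (χ (eps p) (eps i))⁻¹ (χ (eps p) (eps p))⁻¹ (ι 𝕜 p) (ι 𝕜 i)
          (1 - cartan χ p i).toNat =
        k • (ι 𝕜 i * ι 𝕜 p ^ (1 - cartan χ p i).toNat)) ∧
    (qFact (χ (eps p) (eps p)) (1 - cartan χ p i).toNat ≠ 0 →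
      (recE (χ (eps p) (eps i)) (χ (eps p) (eps p)) (ι 𝕜 p) (ι 𝕜 i)
          (1 - cartan χ p i).toNat =
        recE (χ (eps i) (eps p))⁻¹ (χ (eps p) (eps p))⁻¹ (ι 𝕜 p) (ι 𝕜 i)
          (1 - cartan χ p i).toNat) ∧
      (recE (χ (eps i) (eps p)) (χ (eps p) (eps p)) (ι 𝕜 p) (ι 𝕜 i)
          (1 - cartan χ p i).toNat =
        recE (χ (eps p) (eps i))⁻¹ (χ (eps p) (eps p))⁻¹ (ι 𝕜 p) (ι 𝕜 i)
          (1 - cartan χ p i).toNat)) := by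
  obtain ⟨n, hN, hspec, hmin⟩ := exists_toNat_one_sub_cartan_eq hp hip
  have hq := hχ.2.2 (eps p) (eps p)
  have hpi := hχ.2.2 (eps p) (eps i)
  have hip' := hχ.2.2 (eps i) (eps p)
  have hspec' := hspec.imp_right fun h => (mul_right_comm _ _ _).trans h
  rw [hN]
  refine ⟨exists_recE_sub_recE_inv_inv_eq_smul _ _ _ hpi hq hspec hmin,
    exists_recE_sub_recE_inv_inv_eq_smul _ _ _ hip' hq hspec' hmin, fun hfact => ?_⟩
  have hqn := qNat_ne_zero_of_qFact_ne_zero hfact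
  exact ⟨recE_eq_recE_inv_inv _ _ _ hpi hq (hspec.resolve_left hqn),
    recE_eq_recE_inv_inv _ _ _ hip' hq (hspec'.resolve_left hqn)⟩
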